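/- arXiv:0804.2097 — 3 statements merged into one kernel-verified Lean document; each statement's English description precedes it below -/
import Mathlib

section
/- For valuations v₁ ≥ ⋯ ≥ vₙ ≥ 0, a subset T of agents, a threshold index ℓ, price v_{ℓ+1} (with v_{n+1}=0), and d_i = v_i − v_{i+1}, the residual surplus W(T, v_{ℓ+1}) of the k-unit v_{ℓ+1}-lottery on T satisfies W(T, v_{ℓ+1}) = (min(k, n^T_ℓ)/n^T_ℓ) · Σ_{i=1}^{ℓ} n^T_i · d_i, where n^T_i = |T ∩ {1,…,i}|. -/
open Finset

/-!
Summing by parts with the indicator of `T` as weights gives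
`Σ_{i ≤ ℓ} n^T_i d_i = Σ_{j ∈ T, j ≤ ℓ} (v_j - v_{ℓ+1})`; multiplying by `min(k, n^T_ℓ)/n^T_ℓ`
turns the `n^T_ℓ · v_{ℓ+1}` term into `min(k, n^T_ℓ) · v_{ℓ+1}`.
-/

theorem sum_Icc_partialSum_mul_sub {R : Type*} [CommRing R] (w v : ℕ → R) (ℓ : ℕ) :
    ∑ i ∈ Icc 1 ℓ, (∑ j ∈ Icc 1 i, w j) * (v i - v (i + 1))
      = ∑ j ∈ Icc 1 ℓ, w j * (v j - v (ℓ + 1)) := by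
  induction ℓ with
  | zero => simp
  | succ ℓ ih =>
    have hsplit : ∑ j ∈ Icc 1 ℓ, w j * (v j - v (ℓ + 2))
        = ∑ j ∈ Icc 1 ℓ, w j * (v j - v (ℓ + 1))
          + (∑ j ∈ Icc 1 ℓ, w j) * (v (ℓ + 1) - v (ℓ + 2)) := by
      rw [sum_mul, ← sum_add_distrib]
      exact sum_congr rfl fun j _ => by ring
    rw [sum_Icc_succ_top (by omega), ih, sum_Icc_succ_top (by omega), sum_Icc_succ_top (by omega),
      hsplit]
    ring

theorem sum_Icc_card_inter_mul_sub (T : Finset ℕ) (v : ℕ → ℝ) (ℓ : ℕ) :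
    ∑ i ∈ Icc 1 ℓ, ((T ∩ Icc 1 i).card : ℝ) * (v i - v (i + 1))
      = ∑ j ∈ T ∩ Icc 1 ℓ, (v j - v (ℓ + 1)) := by
  have hcount : ∀ i, ((T ∩ Icc 1 i).card : ℝ) = ∑ j ∈ Icc 1 i, if j ∈ T then 1 else 0 := by
    intro i
    rw [sum_boole, filter_mem_eq_inter, inter_comm]
  simp only [hcount, sum_Icc_partialSum_mul_sub, boole_mul]
  rw [sum_ite_mem, inter_comm]

theorem lottery_surplus_identity_general (k ℓ : ℕ) (v : ℕ → ℝ) (T : Finset ℕ) :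
    ((min k (T ∩ Finset.Icc 1 ℓ).card : ℕ) : ℝ) / ((T ∩ Finset.Icc 1 ℓ).card : ℝ) *
        (∑ i ∈ T ∩ Finset.Icc 1 ℓ, v i)
      - ((min k (T ∩ Finset.Icc 1 ℓ).card : ℕ) : ℝ) * v (ℓ + 1)
    = ((min k (T ∩ Finset.Icc 1 ℓ).card : ℕ) : ℝ) / ((T ∩ Finset.Icc 1 ℓ).card : ℝ) *
        ∑ i ∈ Finset.Icc 1 ℓ, ((T ∩ Finset.Icc 1 i).card : ℝ) * (v i - v (i + 1)) := by
  set m := (T ∩ Icc 1 ℓ).card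
  set c : ℝ := ((min k m : ℕ) : ℝ)
  -- `c / m * m = c` also when `m = 0`, since then `c = min k 0 = 0`.
  have hc : c / m * m = c := div_mul_cancel_of_imp fun hm => by
    simp [c, show m = 0 by exact_mod_cast hm]
  rw [sum_Icc_card_inter_mul_sub, sum_sub_distrib, sum_const, nsmul_eq_mul, mul_sub,
    ← mul_assoc, hc]

/-- For sorted valuations with `d i = v i - v (i+1)` and
`n^T_i = |T ∩ {1,…,i}|`, the residual surplus of the `k`-unit
`v_{ℓ+1}`-lottery on `T` equals
`(min(k, n^T_ℓ)/n^T_ℓ) · Σ_{i=1}^{ℓ} n^T_i · d_i`. -/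
theorem lottery_surplus_identity (n k ℓ : ℕ) (v : ℕ → ℝ) (T : Finset ℕ)
    (hT : T ⊆ Finset.Icc 1 n) (hℓ : ℓ ≤ n)
    (hsort : ∀ i, v (i + 1) ≤ v i) (hnn : ∀ i, 0 ≤ v i) (hend : v (n + 1) = 0)
    (hcard : 1 ≤ (T ∩ Finset.Icc 1 ℓ).card) :
    ((min k (T ∩ Finset.Icc 1 ℓ).card : ℕ) : ℝ) / ((T ∩ Finset.Icc 1 ℓ).card : ℝ) *
        (∑ i ∈ T ∩ Finset.Icc 1 ℓ, v i)
      - ((min k (T ∩ Finset.Icc 1 ℓ).card : ℕ) : ℝ) * v (ℓ + 1)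
    = ((min k (T ∩ Finset.Icc 1 ℓ).card : ℕ) : ℝ) / ((T ∩ Finset.Icc 1 ℓ).card : ℝ) *
        ∑ i ∈ Finset.Icc 1 ℓ, ((T ∩ Finset.Icc 1 i).card : ℝ) * (v i - v (i + 1)) :=
  lottery_surplus_identity_general k ℓ v T
end

section
/- For two i.i.d. standard exponential valuations v₁ ≥ v₂, the expected value of G(v₁,v₂) = max{(v₁+v₂)/2, v₁ − v₂/2} equals 4/3. -/
/-!
Fix the first valuation `x > 0`. As a function of the second valuation `y`, `G` is affine on
each of the pieces `y ≤ x / 2`, `x / 2 ≤ y ≤ 2x`, `2x ≤ y`, where it equals `x - y / 2`,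
`(x + y) / 2` and `y - x / 2`. Integrating affine functions against `e^{-y}` gives
`E[G | v = x] = x - 1/2 + e^{-x/2} + e^{-2x}/2`, and integrating this against `e^{-x}` gives
`1/2 + 2/3 + 1/6 = 4/3`.
-/

open MeasureTheory Set Filter Real Topology

lemma hasDerivAt_affine_mul_exp_neg (p q y : ℝ) :
    HasDerivAt (fun y => -(p + q + q * y) * exp (-y)) ((p + q * y) * exp (-y)) y :=
  ((((hasDerivAt_id y).const_mul q).const_add (p + q)).neg.mul
    (hasDerivAt_neg y).exp).congr_deriv (by simp only [Pi.neg_apply, id]; ring)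

lemma integrableOn_Ioi_mul_exp_neg (a : ℝ) : IntegrableOn (fun y => y * exp (-y)) (Ioi a) :=
  integrable_of_isBigO_exp_neg one_half_pos (by fun_prop)
    ((Gamma_integrand_isLittleO 1).isBigO.congr_left fun y => by rw [rpow_one, mul_comm])

lemma integrableOn_Ioi_affine_mul_exp_neg (p q a : ℝ) :
    IntegrableOn (fun y => (p + q * y) * exp (-y)) (Ioi a) :=
  IntegrableOn.congr_fun (((integrableOn_exp_neg_Ioi a).const_mul p).add
    ((integrableOn_Ioi_mul_exp_neg a).const_mul q)) (fun y _ => by simp only [Pi.add_apply]; ring)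
    measurableSet_Ioi

lemma integral_Ioi_affine_mul_exp_neg (p q a : ℝ) :
    ∫ y in Ioi a, (p + q * y) * exp (-y) = (p + q + q * a) * exp (-a) := by
  have hlim : Tendsto (fun y => -(p + q + q * y) * exp (-y)) atTop (𝓝 0) := by
    have := ((tendsto_pow_mul_exp_neg_atTop_nhds_zero 1).const_mul (-q)).add
      (tendsto_exp_neg_atTop_nhds_zero.const_mul (-(p + q)))
    simp only [mul_zero, add_zero] at this
    exact this.congr fun y => by ring
  rw [integral_Ioi_of_hasDerivAt_of_tendsto' (fun y _ => hasDerivAt_affine_mul_exp_neg p q y)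
    (integrableOn_Ioi_affine_mul_exp_neg p q a) hlim]
  ring

lemma integral_affine_mul_exp_neg (p q a b : ℝ) :
    ∫ y in a..b, (p + q * y) * exp (-y) =
      (p + q + q * a) * exp (-a) - (p + q + q * b) * exp (-b) := by
  rw [← intervalIntegral.integral_Ioi_sub_Ioi' (integrableOn_Ioi_affine_mul_exp_neg p q a)
    (integrableOn_Ioi_affine_mul_exp_neg p q b), integral_Ioi_affine_mul_exp_neg,
    integral_Ioi_affine_mul_exp_neg]

noncomputable def benchmark (v₁ v₂ : ℝ) : ℝ := max ((v₁ + v₂) / 2) (v₁ - v₂ / 2)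

lemma benchmark_of_le_two_mul {v₁ v₂ : ℝ} (h : v₁ ≤ 2 * v₂) :
    benchmark v₁ v₂ = (v₁ + v₂) / 2 :=
  max_eq_left (by linarith)

lemma benchmark_of_two_mul_le {v₁ v₂ : ℝ} (h : 2 * v₂ ≤ v₁) :
    benchmark v₁ v₂ = v₁ - v₂ / 2 :=
  max_eq_right (by linarith)

lemma benchmark_max_min_of_two_mul_le {x y : ℝ} (hy : 0 ≤ y) (h : 2 * y ≤ x) :
    benchmark (max x y) (min x y) = x - y / 2 := by
  rw [max_eq_left (by linarith), min_eq_right (by linarith), benchmark_of_two_mul_le h]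

lemma benchmark_max_min_of_le_two_mul {x y : ℝ} (hx : x ≤ 2 * y) (hy : y ≤ 2 * x) :
    benchmark (max x y) (min x y) = (x + y) / 2 := by
  rcases le_total x y with hxy | hxy
  · rw [max_eq_right hxy, min_eq_left hxy, benchmark_of_le_two_mul hy, add_comm]
  · rw [max_eq_left hxy, min_eq_right hxy, benchmark_of_le_two_mul hx]

noncomputable def condBenchmark (x : ℝ) : ℝ :=
  x - 1 / 2 + exp (-(x / 2)) + exp (-(2 * x)) / 2

lemma integral_Ioi_benchmark_max_min_mul_exp_neg {x : ℝ} (hx : 0 < x) :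
    ∫ y in Ioi 0, benchmark (max x y) (min x y) * exp (-y) = condBenchmark x := by
  set f := fun y => benchmark (max x y) (min x y) * exp (-y)
  have hf : Continuous f := by simp only [f, benchmark]; fun_prop
  have low : EqOn f (fun y => (x + -(1 / 2) * y) * exp (-y)) (uIcc 0 (x / 2)) := by
    intro y hy
    rw [uIcc_of_le (by linarith)] at hy
    simp only [f, benchmark_max_min_of_two_mul_le hy.1 (by linarith [hy.2])]
    ring
  have middle : EqOn f (fun y => (x / 2 + 1 / 2 * y) * exp (-y)) (uIcc (x / 2) (2 * x)) := by
    intro y hy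
    rw [uIcc_of_le (by linarith)] at hy
    simp only [f, benchmark_max_min_of_le_two_mul (by linarith [hy.1]) hy.2]
    ring
  have high : EqOn f (fun y => (-(x / 2) + 1 * y) * exp (-y)) (Ioi (2 * x)) := by
    intro y (hy : 2 * x < y)
    simp only [f, max_comm x, min_comm x, benchmark_max_min_of_two_mul_le hx.le hy.le]
    ring
  rw [← intervalIntegral.integral_interval_add_Ioi' (hf.intervalIntegrable _ _)
      ((integrableOn_Ioi_affine_mul_exp_neg _ _ _).congr_fun high.symm measurableSet_Ioi),
    ← intervalIntegral.integral_add_adjacent_intervals (b := x / 2)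
      (hf.intervalIntegrable _ _) (hf.intervalIntegrable _ _),
    intervalIntegral.integral_congr low, intervalIntegral.integral_congr middle,
    setIntegral_congr_fun measurableSet_Ioi high, integral_affine_mul_exp_neg,
    integral_affine_mul_exp_neg, integral_Ioi_affine_mul_exp_neg, neg_zero, exp_zero,
    condBenchmark]
  ring

lemma integral_Ioi_condBenchmark_mul_exp_neg :
    ∫ x in Ioi 0, condBenchmark x * exp (-x) = 4 / 3 := by
  have split : ∀ x : ℝ, condBenchmark x * exp (-x) =
      (-(1 / 2) + 1 * x) * exp (-x) + exp (-(3 / 2) * x) + exp (-3 * x) / 2 := by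
    intro x
    rw [condBenchmark, show -(3 / 2) * x = -(x / 2) + -x by ring,
      show -3 * x = -(2 * x) + -x by ring, exp_add, exp_add]
    ring
  have linear := integrableOn_Ioi_affine_mul_exp_neg (-(1 / 2)) 1 0
  have rate₁ : IntegrableOn (fun x => exp (-(3 / 2) * x)) (Ioi 0) :=
    exp_neg_integrableOn_Ioi 0 (by norm_num)
  have rate₂ := (exp_neg_integrableOn_Ioi 0 (b := 3) (by norm_num)).div_const 2
  simp_rw [split]
  rw [integral_add ?_ rate₂, integral_add linear rate₁, integral_div,
    integral_Ioi_affine_mul_exp_neg, integral_exp_mul_Ioi (by norm_num),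
    integral_exp_mul_Ioi (by norm_num)]
  · norm_num
  · exact linear.add rate₁

/-- For two i.i.d. standard exponential valuations `v₁ ≥ v₂`, the expectation of
`G(v₁,v₂) = max{(v₁+v₂)/2, v₁ - v₂/2}` equals `4/3`. -/
theorem expected_benchmark_exponential :
    (∫ x in Set.Ioi (0:ℝ), ∫ y in Set.Ioi (0:ℝ),
        (max ((max x y + min x y) / 2) (max x y - min x y / 2)) *
          (Real.exp (-x) * Real.exp (-y)))
      = 4 / 3 := by
  have inner : ∀ x ∈ Ioi (0 : ℝ),
      ∫ y in Ioi 0, benchmark (max x y) (min x y) * (exp (-x) * exp (-y)) =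
        condBenchmark x * exp (-x) := fun x hx => by
    simp_rw [mul_left_comm _ (exp (-x)), integral_const_mul,
      integral_Ioi_benchmark_max_min_mul_exp_neg hx, mul_comm]
  exact (setIntegral_congr_fun measurableSet_Ioi inner).trans
    integral_Ioi_condBenchmark_mul_exp_neg
end

section
/- Let k ≤ n be powers of 2 and v₁ ≥ ⋯ ≥ vₙ ≥ 0. The mechanism that picks j uniformly from {log₂ k, …, log₂ n} and runs a k-unit v_{2^j+1}-lottery (with v_{n+1}=0) has expected residual surplus at least V*/(2(1 + log₂(n/k))), where V* = Σ_{i=1}^k v_i is the full surplus. Hence money-burning mechanisms are O(1 + log(n/k))-surplus maximizers. -/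
open Finset

/-!
The `k`-unit lottery at price `v_{2^j+1}` leaves the top `2^j` agents a residual surplus
`R_j`. At `j = log₂ k` this is `V* - k v_{k+1} ≥ V*/2 - (k/2) v_{k+1}`, and each doubling of
`2^j` beyond `k` still contributes `R_j ≥ (k/2)(v_{2^{j-1}+1} - v_{2^j+1})`, since each of the
top `2^{j-1}` agents has value at least `v_{2^{j-1}+1}`. The sum of the `R_j` telescopes to at least
`V*/2 - (k/2) v_{n+1} = V*/2`, and averaging over the `1 + log₂(n/k)` choices of `j` gives the
bound.
-/

/-- Residual surplus of a `k`-unit lottery at price `v (m + 1)` among the top `m` agents, each of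
whom wins with probability `k / m`. -/
noncomputable def residualSurplus (v : ℕ → ℝ) (k : ℝ) (m : ℕ) : ℝ :=
  k / m * ∑ i ∈ Icc 1 m, (v i - v (m + 1))

section Antitone

variable {v : ℕ → ℝ}

theorem nsmul_le_sum_Icc_of_antitone (hv : Antitone v) {m c : ℕ} (hc : m ≤ c) :
    m • v (c + 1) ≤ ∑ i ∈ Icc 1 m, v i := by
  simpa using card_nsmul_le_sum (Icc 1 m) v (v (c + 1))
    fun i hi ↦ hv ((mem_Icc.mp hi).2.trans (Nat.le_succ_of_le hc))

theorem residualSurplus_self {m : ℕ} (hm : m ≠ 0) :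
    residualSurplus v m m = ∑ i ∈ Icc 1 m, v i - m * v (m + 1) := by
  simp [residualSurplus, sum_sub_distrib, div_self (Nat.cast_ne_zero.mpr hm : (m : ℝ) ≠ 0)]

theorem half_mul_sub_le_residualSurplus_two_mul (hv : Antitone v) {k : ℝ} (hk : 0 ≤ k) (m : ℕ) :
    k / 2 * (v (m + 1) - v (2 * m + 1)) ≤ residualSurplus v k (2 * m) := by
  rcases Nat.eq_zero_or_pos m with rfl | hm
  · simp [residualSurplus]
  have top_half : m * (v (m + 1) - v (2 * m + 1)) ≤ ∑ i ∈ Icc 1 m, (v i - v (2 * m + 1)) := by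
    rw [sum_sub_distrib, sum_const, Nat.card_Icc, Nat.add_sub_cancel, nsmul_eq_mul, mul_sub]
    have := nsmul_le_sum_Icc_of_antitone hv (le_refl m)
    rw [nsmul_eq_mul] at this
    linarith
  have all : ∑ i ∈ Icc 1 m, (v i - v (2 * m + 1)) ≤ ∑ i ∈ Icc 1 (2 * m), (v i - v (2 * m + 1)) :=
    sum_le_sum_of_subset_of_nonneg (Icc_subset_Icc_right (by omega)) fun i hi _ ↦
      sub_nonneg.mpr (hv ((mem_Icc.mp hi).2.trans (Nat.le_succ _)))
  calc k / 2 * (v (m + 1) - v (2 * m + 1))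
      = k / (2 * m : ℕ) * (m * (v (m + 1) - v (2 * m + 1))) := by
        push_cast; field_simp
    _ ≤ residualSurplus v k (2 * m) :=
        mul_le_mul_of_nonneg_left (top_half.trans all) (by positivity)

theorem half_sum_sub_le_sum_residualSurplus (hv : Antitone v) {a c : ℕ} (hac : a ≤ c) :
    (∑ i ∈ Icc 1 (2 ^ a), v i) / 2 - 2 ^ a / 2 * v (2 ^ c + 1)
      ≤ ∑ j ∈ Icc a c, residualSurplus v (2 ^ a) (2 ^ j) := by
  induction c, hac using Nat.le_induction with
  | base =>
    have hsum := nsmul_le_sum_Icc_of_antitone hv (le_refl (2 ^ a))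
    have hself := residualSurplus_self (v := v) (m := 2 ^ a) (by positivity)
    rw [Icc_self, sum_singleton]
    simp only [nsmul_eq_mul, Nat.cast_pow, Nat.cast_ofNat] at hsum hself ⊢
    linarith
  | succ c hac ih =>
    have doubling := half_mul_sub_le_residualSurplus_two_mul hv
      (by positivity : (0 : ℝ) ≤ 2 ^ a) (2 ^ c)
    rw [← pow_succ'] at doubling
    rw [sum_Icc_succ_top (Nat.le_succ_of_le hac)]
    linarith

end Antitone

theorem money_burning_log_surplus_maximizer_general (a b : ℕ) (hab : a ≤ b) (v : ℕ → ℝ)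
    (hsort : ∀ i, v (i + 1) ≤ v i)
    (hend : v (2 ^ b + 1) = 0) :
    (∑ i ∈ Finset.Icc 1 (2 ^ a), v i) / (2 * ((b : ℝ) - a + 1))
      ≤ (1 / ((b : ℝ) - a + 1)) *
          ∑ j ∈ Finset.Icc a b,
            ((2 ^ a : ℝ) / (2 ^ j : ℝ)) *
              ∑ i ∈ Finset.Icc 1 (2 ^ j), (v i - v (2 ^ j + 1)) := by
  have telescoped := half_sum_sub_le_sum_residualSurplus (antitone_nat_of_succ_le hsort) hab
  simp only [hend, mul_zero, sub_zero, residualSurplus, Nat.cast_pow, Nat.cast_ofNat]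
    at telescoped
  have hchoices : (0 : ℝ) < b - a + 1 := by
    have : (a : ℝ) ≤ b := Nat.cast_le.mpr hab
    linarith
  calc (∑ i ∈ Icc 1 (2 ^ a), v i) / (2 * ((b : ℝ) - a + 1))
      = 1 / ((b : ℝ) - a + 1) * ((∑ i ∈ Icc 1 (2 ^ a), v i) / 2) := by
        field_simp
    _ ≤ _ := mul_le_mul_of_nonneg_left telescoped (by positivity)

/-- Picking `j` uniformly from `{a, …, b}` (where `k = 2^a`, `n = 2^b`) and
running a `k`-unit `v_{2^j+1}`-lottery achieves expected residual surplus at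
least `V*/(2(1 + log₂(n/k)))`, where `V* = Σ_{i=1}^k v_i` is the full surplus
and `1 + log₂(n/k) = b - a + 1`. Hence money-burning mechanisms are
`O(1 + log(n/k))`-surplus maximizers. -/
theorem money_burning_log_surplus_maximizer (a b : ℕ) (hab : a ≤ b) (v : ℕ → ℝ)
    (hsort : ∀ i, v (i + 1) ≤ v i) (hnn : ∀ i, 0 ≤ v i)
    (hend : v (2 ^ b + 1) = 0) :
    (∑ i ∈ Finset.Icc 1 (2 ^ a), v i) / (2 * ((b : ℝ) - a + 1))
      ≤ (1 / ((b : ℝ) - a + 1)) *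
          ∑ j ∈ Finset.Icc a b,
            ((2 ^ a : ℝ) / (2 ^ j : ℝ)) *
              ∑ i ∈ Finset.Icc 1 (2 ^ j), (v i - v (2 ^ j + 1)) :=
  money_burning_log_surplus_maximizer_general a b hab v hsort hend
end
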